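/- Trace property of the doubled representation: for every function g : (ZMod 2d)² → ℂ, Σ_{m∈(ZMod 2d)²} (P g)(m) = Tr(Op[g]), where P := Wig ∘ Op. -/

import Mathlib

open scoped BigOperators
open Matrix

noncomputable section

/-- `omega n a = exp(2πi a / n)`, the `n`-th roots of unity raised to integer power `a`. -/
def omega (n : ℕ) (a : ℤ) : ℂ := Complex.exp (2 * Real.pi * Complex.I * a / n)

/-- `Zpow d k = Σ_j ω_d^(k·j) |j⟩⟨j|`, the `k`-th power of the clock operator. -/
def Zpow (d : ℕ) (k : ℤ) : Matrix (ZMod d) (ZMod d) ℂ :=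
  Matrix.of fun i j => if i = j then omega d (k * (j.val : ℤ)) else 0

/-- `Xpow d k = Σ_j |j+k⟩⟨j|`, the `k`-th power of the shift operator. -/
def Xpow (d : ℕ) (k : ℤ) : Matrix (ZMod d) (ZMod d) ℂ :=
  Matrix.of fun i j => if i = j + (k : ZMod d) then 1 else 0

/-- The Weyl–Heisenberg displacement operator `V(k) = ω_{2d}^{-k₁k₂} Z^{k₂} X^{k₁}` for `k ∈ ℤ²`. -/
def Vint (d : ℕ) [NeZero d] (k : ℤ × ℤ) : Matrix (ZMod d) (ZMod d) ℂ :=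
  omega (2 * d) (-(k.1 * k.2)) • (Zpow d k.2 * Xpow d k.1)

/-- The WHDO on the doubled phase space `(ZMod (2d))²`. -/
def V (d : ℕ) [NeZero d] (m : ZMod (2 * d) × ZMod (2 * d)) : Matrix (ZMod d) (ZMod d) ℂ :=
  Vint d ((m.1.val : ℤ), (m.2.val : ℤ))

/-- Discrete parity operator `R = Σ_j |-j⟩⟨j|`. -/
def R (d : ℕ) : Matrix (ZMod d) (ZMod d) ℂ :=
  Matrix.of fun i j => if i = -j then 1 else 0

/-- Doubled phase-point operator `A(m) = V(m)·R`. -/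
def A (d : ℕ) [NeZero d] (m : ZMod (2 * d) × ZMod (2 * d)) : Matrix (ZMod d) (ZMod d) ℂ :=
  V d m * R d

variable (d : ℕ) [NeZero d]

/-- Doubled Wigner transform: `Wig[O](m) = (1/(2d)) Tr(A(m)† O)`. -/
def Wig (O : Matrix (ZMod d) (ZMod d) ℂ) (m : ZMod (2 * d) × ZMod (2 * d)) : ℂ :=
  (1 / (2 * (d : ℂ))) * ((A d m)ᴴ * O).trace

/-- Doubled Weyl transform: `Op[f] = (1/2) Σ_m f(m) A(m)`. -/
def OpW (f : ZMod (2 * d) × ZMod (2 * d) → ℂ) : Matrix (ZMod d) (ZMod d) ℂ :=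
  (1 / 2 : ℂ) • ∑ m : ZMod (2 * d) × ZMod (2 * d), f m • A d m

/-- The projector `P = Wig ∘ Op` on functions on the doubled phase space. -/
def P (f : ZMod (2 * d) × ZMod (2 * d) → ℂ) : ZMod (2 * d) × ZMod (2 * d) → ℂ :=
  Wig d (OpW d f)

/-- Inner product on functions on the doubled phase space. -/
def ip (f g : ZMod (2 * d) × ZMod (2 * d) → ℂ) : ℂ :=
  ∑ m : ZMod (2 * d) × ZMod (2 * d), (starRingEnd ℂ) (f m) * g m

/-- Cross-correlation `(f ⋆ g)(m) = Σ_{m'} conj(f m') g(m'+m)`. -/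
def crossCor (f g : ZMod (2 * d) × ZMod (2 * d) → ℂ) (m : ZMod (2 * d) × ZMod (2 * d)) : ℂ :=
  ∑ m' : ZMod (2 * d) × ZMod (2 * d), (starRingEnd ℂ) (f m') * g (m' + m)

/-- The doubling map `ZMod d → ZMod (2d)`, `a ↦ 2a`. -/
def dbl (a : ZMod d) : ZMod (2 * d) := ((2 * a.val : ℕ) : ZMod (2 * d))

/-- The doubling map on the phase space. -/
def dbl2 (α : ZMod d × ZMod d) : ZMod (2 * d) × ZMod (2 * d) := (dbl d α.1, dbl d α.2)

/-- A stencil `M` is valid if its projection `M̄ = P M` is real-valued (M1),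
sums to 1 (M2), and satisfies the autocorrelation condition (M3). -/
def IsValidStencil (M : ZMod (2 * d) × ZMod (2 * d) → ℂ) : Prop :=
  (∀ m, (starRingEnd ℂ) (P d M m) = P d M m) ∧
  (∑ m : ZMod (2 * d) × ZMod (2 * d), P d M m) = 1 ∧
  (∀ α : ZMod d × ZMod d,
    crossCor d (P d M) (P d M) (dbl2 d α) = if α = 0 then 1 else 0)

/-- The `M`-PPO frame generated by a stencil `M`:
`A^M(α) = (1/2) Σ_{m'} M(m') A(m' + 2α)`. -/
def AM (M : ZMod (2 * d) × ZMod (2 * d) → ℂ) (α : ZMod d × ZMod d) :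
    Matrix (ZMod d) (ZMod d) ℂ :=
  (1 / 2 : ℂ) • ∑ m' : ZMod (2 * d) × ZMod (2 * d), M m' • A d (m' + dbl2 d α)

/-- A family of phase-point operators on `(ZMod d)²` is a valid PPO frame if it is
Hermitian (A1), trace-1 (A2), orthogonal (A3), and WHDO-covariant (A4). -/
def IsValidPPOFrame (B : ZMod d × ZMod d → Matrix (ZMod d) (ZMod d) ℂ) : Prop :=
  (∀ α, (B α)ᴴ = B α) ∧
  (∀ α, (B α).trace = 1) ∧
  (∀ α β, ((B α)ᴴ * B β).trace = if α = β then (d : ℂ) else 0) ∧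
  (∀ (k : ℤ × ℤ) (α : ZMod d × ZMod d),
    Vint d k * B α * (Vint d k)ᴴ = B (α + ((k.1 : ZMod d), (k.2 : ZMod d))))

/-- The `M`-Wigner transform: `Wig^M[O](α) = (1/d) Tr(A^M(α)† O)`. -/
def WigM (M : ZMod (2 * d) × ZMod (2 * d) → ℂ) (O : Matrix (ZMod d) (ZMod d) ℂ)
    (α : ZMod d × ZMod d) : ℂ :=
  (1 / (d : ℂ)) * ((AM d M α)ᴴ * O).trace

/-- The `M`-Weyl transform: `Op^M[f] = Σ_α f(α) A^M(α)`. -/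
def OpM (M : ZMod (2 * d) × ZMod (2 * d) → ℂ) (f : ZMod d × ZMod d → ℂ) :
    Matrix (ZMod d) (ZMod d) ℂ :=
  ∑ α : ZMod d × ZMod d, f α • AM d M α

/-- The symplectic discrete Fourier transform. -/
def SDFT (f : ZMod (2 * d) × ZMod (2 * d) → ℂ) (m : ZMod (2 * d) × ZMod (2 * d)) : ℂ :=
  (1 / (2 * (d : ℂ))) * ∑ m' : ZMod (2 * d) × ZMod (2 * d),
    omega (2 * d) (-((m.1.val : ℤ) * (m'.2.val : ℤ) - (m.2.val : ℤ) * (m'.1.val : ℤ))) * f m'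


/-- Coarse-grain-stencil PPO frame: `B(α) = (1/2) Σ_{b∈{0,1}²} A(2α + b)`. -/
def Bcgs (α : ZMod d × ZMod d) : Matrix (ZMod d) (ZMod d) ℂ :=
  (1 / 2 : ℂ) • ∑ b : ZMod 2 × ZMod 2,
    A d (dbl d α.1 + (b.1.val : ZMod (2 * d)), dbl d α.2 + (b.2.val : ZMod (2 * d)))

/-- Momentum basis state `|p⟩ = (1/√d) Σ_j ω_d^{p j} |j⟩`. -/
def pvec (p : ZMod d) : ZMod d → ℂ :=
  fun j => (1 / ((Real.sqrt d : ℝ) : ℂ)) * omega d ((p.val : ℤ) * (j.val : ℤ))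

/-- One-dimensional Dirichlet kernel `K(m) = (1/d) Σ_{t=-(d-1)/2}^{(d-1)/2} ω_{2d}^{t m}`. -/
def Kdir (m : ZMod (2 * d)) : ℂ :=
  (1 / (d : ℂ)) * ∑ t ∈ Finset.Icc (-(((d : ℤ) - 1) / 2)) (((d : ℤ) - 1) / 2),
    omega (2 * d) (t * (m.val : ℤ))

end


noncomputable section

lemma omega_add' (n : ℕ) (a b : ℤ) : omega n (a + b) = omega n a * omega n b := by
  unfold omega; rw [← Complex.exp_add]; congr 1; push_cast; ring

lemma omega_nat_mul' (n : ℕ) (k : ℕ) (a : ℤ) : omega n ((k : ℤ) * a) = omega n a ^ k := by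
  induction k with
  | zero => simp [omega]
  | succ k ih =>
    have h : ((k+1 : ℕ) : ℤ) * a = (k : ℤ) * a + a := by push_cast; ring
    rw [h, omega_add', ih, pow_succ]

lemma omega_eq_one_iff' (n : ℕ) [NeZero n] (c : ℤ) : omega n c = 1 ↔ (n : ℤ) ∣ c := by
  unfold omega
  rw [Complex.exp_eq_one_iff]
  have hn : (n : ℂ) ≠ 0 := Nat.cast_ne_zero.mpr (NeZero.ne n)
  have h2 : (2:ℂ) * Real.pi * Complex.I ≠ 0 := by
    simp [Complex.I_ne_zero, Real.pi_ne_zero]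
  constructor
  · rintro ⟨k, hk⟩
    refine ⟨k, ?_⟩
    have hc : (c : ℂ) = (k : ℂ) * n := by
      field_simp at hk
      exact mul_left_cancel₀ h2
        (by linear_combination (2*(Real.pi:ℂ)*Complex.I) * hk : (2:ℂ)*Real.pi*Complex.I*c = 2*Real.pi*Complex.I*((k:ℂ)*n))
    have : c = k * (n:ℤ) := by exact_mod_cast hc
    rw [this]; ring
  · rintro ⟨k, rfl⟩
    exact ⟨k, by field_simp; rw [Int.cast_mul, Int.cast_natCast]⟩

lemma char_sum' (N : ℕ) [NeZero N] (c : ℤ) :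
    ∑ t : ZMod N, omega N ((t.val : ℤ) * c) = if (N:ℤ) ∣ c then (N:ℂ) else 0 := by
  have hrw : ∀ t : ZMod N, omega N ((t.val : ℤ) * c) = (omega N c) ^ t.val := fun t =>
    omega_nat_mul' N t.val c
  simp only [hrw]
  have hsum : ∑ t : ZMod N, (omega N c) ^ t.val = ∑ t ∈ Finset.range N, (omega N c) ^ t := by
    refine Finset.sum_nbij' (i := fun (t : ZMod N) => t.val)
      (j := fun (t : ℕ) => ((t : ℕ) : ZMod N)) ?_ ?_ ?_ ?_ ?_
    · intro a _; exact Finset.mem_range.mpr (ZMod.val_lt a)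
    · intro a _; exact Finset.mem_univ _
    · intro a _; simp [ZMod.natCast_val, ZMod.cast_id]
    · intro a ha; exact ZMod.val_cast_of_lt (Finset.mem_range.mp ha)
    · intro a _; rfl
  rw [hsum]
  by_cases h : (N:ℤ) ∣ c
  · rw [if_pos h]
    simp [(omega_eq_one_iff' N c).mpr h]
  · rw [if_neg h]
    have hz : omega N c ≠ 1 := fun hh => h ((omega_eq_one_iff' N c).mp hh)
    rw [geom_sum_eq hz]
    have hN : omega N c ^ N = 1 := by
      rw [← omega_nat_mul']
      exact (omega_eq_one_iff' N _).mpr ⟨c, rfl⟩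
    simp [hN]

lemma A_apply' (d : ℕ) [NeZero d] (m : ZMod (2 * d) × ZMod (2 * d)) (i j : ZMod d) :
    A d m i j = if i = -j + ((m.1.val : ℕ) : ZMod d) then
      omega (2 * d) (-((m.1.val : ℤ) * (m.2.val : ℤ))) * omega d ((m.2.val : ℤ) * (i.val : ℤ))
    else 0 := by
  simp only [A, V, Vint, R, Zpow, Xpow, Matrix.mul_apply, Matrix.smul_apply, Matrix.of_apply,
    smul_eq_mul, ite_mul, zero_mul, one_mul, mul_ite, mul_zero, mul_one,
    Finset.sum_ite_eq, Finset.sum_ite_eq', Finset.mem_univ, if_true]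
  push_cast
  by_cases h : i = -j + ((m.1.val : ℕ) : ZMod d)
  · rw [if_pos h, if_pos (by exact_mod_cast h), ← h]
  · rw [if_neg h, if_neg (by exact_mod_cast h)]

lemma omega_double' (d : ℕ) [NeZero d] (x : ℤ) : omega d x = omega (2 * d) (2 * x) := by
  unfold omega
  congr 1
  have hd : (d : ℂ) ≠ 0 := Nat.cast_ne_zero.mpr (NeZero.ne d)
  push_cast
  field_simp

lemma sumA' (d : ℕ) [NeZero d] :
    (∑ m : ZMod (2 * d) × ZMod (2 * d), A d m) = ((2 * d : ℕ) : ℂ) • (1 : Matrix (ZMod d) (ZMod d) ℂ) := by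
  ext i j
  rw [Matrix.sum_apply]
  simp only [A_apply']
  rw [Fintype.sum_prod_type]
  have hphase : ∀ (m1 m2 : ZMod (2 * d)),
      omega (2 * d) (-((m1.val : ℤ) * (m2.val : ℤ))) * omega d ((m2.val : ℤ) * (i.val : ℤ))
      = omega (2 * d) ((m2.val : ℤ) * (2 * (i.val : ℤ) - (m1.val : ℤ))) := by
    intro m1 m2
    rw [omega_double' d ((m2.val : ℤ) * (i.val : ℤ)), ← omega_add']
    congr 1
    ring
  have hstep : ∀ m1 : ZMod (2 * d),
      (∑ m2 : ZMod (2 * d), if i = -j + ((m1.val : ℕ) : ZMod d) then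
        omega (2 * d) (-((m1.val : ℤ) * (m2.val : ℤ))) * omega d ((m2.val : ℤ) * (i.val : ℤ))
      else 0)
      = if i = -j + ((m1.val : ℕ) : ZMod d) then
          (if ((2 * d : ℕ) : ℤ) ∣ (2 * (i.val : ℤ) - (m1.val : ℤ)) then ((2 * d : ℕ) : ℂ) else 0)
        else 0 := by
    intro m1
    by_cases h : i = -j + ((m1.val : ℕ) : ZMod d)
    · simp only [if_pos h, hphase]
      exact char_sum' (2 * d) _
    · simp only [if_neg h, Finset.sum_const_zero]
  simp only [hstep]
  set m0 : ZMod (2 * d) := ((2 * i.val : ℕ) : ZMod (2 * d)) with hm0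
  have hval : m0.val = 2 * i.val := ZMod.val_cast_of_lt (by
    have := ZMod.val_lt i
    omega)
  rw [Finset.sum_eq_single m0]
  · have hdvd : ((2 * d : ℕ) : ℤ) ∣ (2 * (i.val : ℤ) - (m0.val : ℤ)) := by
      rw [hval]; push_cast; simp
    have hcast : ((m0.val : ℕ) : ZMod d) = 2 * i := by
      rw [hval]; push_cast [ZMod.natCast_val, ZMod.cast_id]; ring
    rw [hcast]
    by_cases hij : i = j
    · subst hij
      rw [if_pos (by ring : i = -i + 2 * i), if_pos hdvd,
        Matrix.smul_apply, Matrix.one_apply_eq, smul_eq_mul, mul_one]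
    · have hcond : ¬ (i = -j + 2 * i) := by
        intro hh
        have hji : j = i := by linear_combination hh
        exact hij hji.symm
      rw [if_neg hcond, Matrix.smul_apply, Matrix.one_apply_ne hij, smul_zero]
  · intro b _ hb
    have : ¬ ((2 * d : ℕ) : ℤ) ∣ (2 * (i.val : ℤ) - (b.val : ℤ)) := by
      intro hdvd
      have hb2 : b.val < 2 * d := ZMod.val_lt b
      have hi2 : i.val < d := ZMod.val_lt i
      have : 2 * (i.val : ℤ) - (b.val : ℤ) = 0 := by
        refine Int.eq_zero_of_abs_lt_dvd hdvd ?_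
        rw [abs_lt]
        constructor <;> push_cast <;> omega
      have hbv : b.val = 2 * i.val := by omega
      apply hb
      rw [hm0, ← hbv, ZMod.natCast_val, ZMod.cast_id]
    rw [if_neg this, ite_self]
  · intro h; exact absurd (Finset.mem_univ m0) h

end

theorem stmt8 (d : ℕ) [NeZero d] (g : ZMod (2 * d) × ZMod (2 * d) → ℂ) :
    ∑ m : ZMod (2 * d) × ZMod (2 * d), P d g m = (OpW d g).trace := by
  simp only [P, Wig]
  rw [← Finset.mul_sum, ← Matrix.trace_sum]
  have h1 : ∑ m : ZMod (2 * d) × ZMod (2 * d), (A d m)ᴴ * OpW d g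
      = (∑ m : ZMod (2 * d) × ZMod (2 * d), A d m)ᴴ * OpW d g := by
    rw [Matrix.conjTranspose_sum, Finset.sum_mul]
  rw [h1, sumA']
  have h2 : (((2 * d : ℕ) : ℂ) • (1 : Matrix (ZMod d) (ZMod d) ℂ))ᴴ
      = ((2 * d : ℕ) : ℂ) • (1 : Matrix (ZMod d) (ZMod d) ℂ) := by
    simp
  rw [h2, Matrix.smul_mul, Matrix.one_mul, Matrix.trace_smul, smul_eq_mul]
  have hd : (2 * (d : ℂ)) ≠ 0 := by
    simp [Nat.cast_ne_zero.mpr (NeZero.ne d)]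
  push_cast
  field_simp
  exact mul_div_cancel_left₀ _ (Nat.cast_ne_zero.mpr (NeZero.ne d))
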